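/- In the quantum de Rham complex Ωℂ_q[z,∂] carrying the U_q sl(2)-module algebra structure with E ▷ dz = −[2]_q z·dz, K ▷ dz = q² dz, F ▷ dz = 0, E ▷ d∂ = 0, K ▷ d∂ = q⁻² d∂, F ▷ d∂ = −q²[2]_q ∂·d∂ (extended by the module algebra property), the differential d commutes with the U_q sl(2) action: h ▷ d(x) = d(h ▷ x) for all h ∈ U_q sl(2) and x ∈ Ωℂ_q[z,∂]. -/

import Mathlib

noncomputable section

/-- Relations of `U_q sl(2)`: `E = X 0`, `F = X 1`, `K = X 2`. -/
inductive uRel (p : ℕ) (q : ℂ) : FreeAlgebra ℂ (Fin 3) → FreeAlgebra ℂ (Fin 3) → Prop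
  | KE : uRel p q (FreeAlgebra.ι ℂ (2 : Fin 3) * FreeAlgebra.ι ℂ (0 : Fin 3))
      ((q ^ 2) • (FreeAlgebra.ι ℂ (0 : Fin 3) * FreeAlgebra.ι ℂ (2 : Fin 3)))
  | KF : uRel p q (FreeAlgebra.ι ℂ (2 : Fin 3) * FreeAlgebra.ι ℂ (1 : Fin 3))
      (((q ^ 2)⁻¹) • (FreeAlgebra.ι ℂ (1 : Fin 3) * FreeAlgebra.ι ℂ (2 : Fin 3)))
  | EF : uRel p q (FreeAlgebra.ι ℂ (0 : Fin 3) * FreeAlgebra.ι ℂ (1 : Fin 3))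
      (FreeAlgebra.ι ℂ (1 : Fin 3) * FreeAlgebra.ι ℂ (0 : Fin 3)
        + ((q - q⁻¹)⁻¹) • (FreeAlgebra.ι ℂ (2 : Fin 3)
            - (FreeAlgebra.ι ℂ (2 : Fin 3)) ^ (2 * p - 1)))
  | Enil : uRel p q ((FreeAlgebra.ι ℂ (0 : Fin 3)) ^ p) 0
  | Fnil : uRel p q ((FreeAlgebra.ι ℂ (1 : Fin 3)) ^ p) 0
  | Kord : uRel p q ((FreeAlgebra.ι ℂ (2 : Fin 3)) ^ (2 * p)) 1

/-- The restricted quantum group `U_q sl(2)`. -/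
def Uq (p : ℕ) (q : ℂ) : Type := RingQuot (uRel p q)

instance (p : ℕ) (q : ℂ) : Ring (Uq p q) := inferInstanceAs (Ring (RingQuot (uRel p q)))
instance (p : ℕ) (q : ℂ) : Algebra ℂ (Uq p q) :=
  inferInstanceAs (Algebra ℂ (RingQuot (uRel p q)))

def Eu (p : ℕ) (q : ℂ) : Uq p q := RingQuot.mkAlgHom ℂ (uRel p q) (FreeAlgebra.ι ℂ 0)
def Fu (p : ℕ) (q : ℂ) : Uq p q := RingQuot.mkAlgHom ℂ (uRel p q) (FreeAlgebra.ι ℂ 1)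
def Ku (p : ℕ) (q : ℂ) : Uq p q := RingQuot.mkAlgHom ℂ (uRel p q) (FreeAlgebra.ι ℂ 2)

/-- Relations of the quantum de Rham complex `Ωℂ_q[z,∂]`:
`z = X 0`, `∂ = X 1`, `dz = X 2`, `d∂ = X 3`. -/
inductive oRel (p : ℕ) (q : ℂ) : FreeAlgebra ℂ (Fin 4) → FreeAlgebra ℂ (Fin 4) → Prop
  | znil : oRel p q ((FreeAlgebra.ι ℂ (0 : Fin 4)) ^ p) 0
  | dnil : oRel p q ((FreeAlgebra.ι ℂ (1 : Fin 4)) ^ p) 0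
  | dz : oRel p q (FreeAlgebra.ι ℂ (1 : Fin 4) * FreeAlgebra.ι ℂ (0 : Fin 4))
      ((q - q⁻¹) • (1 : FreeAlgebra ℂ (Fin 4))
        + ((q ^ 2)⁻¹) • (FreeAlgebra.ι ℂ (0 : Fin 4) * FreeAlgebra.ι ℂ (1 : Fin 4)))
  | dzdz : oRel p q ((FreeAlgebra.ι ℂ (2 : Fin 4)) ^ 2) 0
  | dddd : oRel p q ((FreeAlgebra.ι ℂ (3 : Fin 4)) ^ 2) 0
  | dddz : oRel p q (FreeAlgebra.ι ℂ (3 : Fin 4) * FreeAlgebra.ι ℂ (2 : Fin 4))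
      ((-(q ^ 2)⁻¹) • (FreeAlgebra.ι ℂ (2 : Fin 4) * FreeAlgebra.ι ℂ (3 : Fin 4)))
  | dz_z : oRel p q (FreeAlgebra.ι ℂ (2 : Fin 4) * FreeAlgebra.ι ℂ (0 : Fin 4))
      (((q ^ 2)⁻¹) • (FreeAlgebra.ι ℂ (0 : Fin 4) * FreeAlgebra.ι ℂ (2 : Fin 4)))
  | dd_d : oRel p q (FreeAlgebra.ι ℂ (3 : Fin 4) * FreeAlgebra.ι ℂ (1 : Fin 4))
      ((q ^ 2) • (FreeAlgebra.ι ℂ (1 : Fin 4) * FreeAlgebra.ι ℂ (3 : Fin 4)))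
  | dz_d : oRel p q (FreeAlgebra.ι ℂ (2 : Fin 4) * FreeAlgebra.ι ℂ (1 : Fin 4))
      ((q ^ 2) • (FreeAlgebra.ι ℂ (1 : Fin 4) * FreeAlgebra.ι ℂ (2 : Fin 4)))
  | dd_z : oRel p q (FreeAlgebra.ι ℂ (3 : Fin 4) * FreeAlgebra.ι ℂ (0 : Fin 4))
      (((q ^ 2)⁻¹) • (FreeAlgebra.ι ℂ (0 : Fin 4) * FreeAlgebra.ι ℂ (3 : Fin 4)))

/-- The quantum de Rham complex `Ωℂ_q[z,∂]` of `ℂ_q[z,∂]`. -/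
def OmegaCq (p : ℕ) (q : ℂ) : Type := RingQuot (oRel p q)

instance (p : ℕ) (q : ℂ) : Ring (OmegaCq p q) := inferInstanceAs (Ring (RingQuot (oRel p q)))
instance (p : ℕ) (q : ℂ) : Algebra ℂ (OmegaCq p q) :=
  inferInstanceAs (Algebra ℂ (RingQuot (oRel p q)))

def Zo (p : ℕ) (q : ℂ) : OmegaCq p q := RingQuot.mkAlgHom ℂ (oRel p q) (FreeAlgebra.ι ℂ 0)
def Do (p : ℕ) (q : ℂ) : OmegaCq p q := RingQuot.mkAlgHom ℂ (oRel p q) (FreeAlgebra.ι ℂ 1)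
def DZo (p : ℕ) (q : ℂ) : OmegaCq p q := RingQuot.mkAlgHom ℂ (oRel p q) (FreeAlgebra.ι ℂ 2)
def DDo (p : ℕ) (q : ℂ) : OmegaCq p q := RingQuot.mkAlgHom ℂ (oRel p q) (FreeAlgebra.ι ℂ 3)

/-!
`d` is a `(par, 1)`-twisted derivation, `E` a `(1, K)`- and `F` a `(K^(2p-1), 1)`-twisted
derivation, and `par`, `K` are algebra endomorphisms. For two such twisted maps the set on which
they commute is closed under products as soon as each commutes with the twists of the other, so
commuting on the generators `z, ∂, dz, d∂` suffices. Taking the pairs in the order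
`(par, K), (K, d), (par, E), (par, F), (d, E), (d, F)`, the twist compatibilities needed at each
step are the ones established before it. On generators everything is immediate except
`d (E ▷ z)` and `d (F ▷ ∂)`, which come down to `q (1 + q⁻²) = [2]_q` and `q (1 + q²) = q² [2]_q`.
Finally, the elements of `U_q sl(2)` acting by maps commuting with `d` form a subalgebra
containing `E, F, K`.
-/

section TwistedDerivation

variable {R A : Type*} [CommSemiring R] [Semiring A] [Algebra R A]

def IsTwistedDerivation (σ τ D : Module.End R A) : Prop :=
  ∀ a b, D (a * b) = σ a * D b + D a * τ b

theorem Module.End.commute_of_adjoin_eq_top {s : Set A} (hs : Algebra.adjoin R s = ⊤)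
    {f g : Module.End R A} (hone : f (g 1) = g (f 1))
    (hmul : ∀ a b, f (g a) = g (f a) → f (g b) = g (f b) → f (g (a * b)) = g (f (a * b)))
    (hgen : ∀ x ∈ s, f (g x) = g (f x)) : Commute f g := by
  refine LinearMap.ext fun x => ?_
  have hx : x ∈ Algebra.adjoin R s := hs ▸ Algebra.mem_top
  induction hx using Algebra.adjoin_induction with
  | mem x hx => exact hgen x hx
  | algebraMap r =>
    simp only [Module.End.mul_apply, Algebra.algebraMap_eq_smul_one, map_smul, hone]
  | add x y _ _ hx hy => simp only [Module.End.mul_apply, map_add] at hx hy ⊢; rw [hx, hy]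
  | mul x y _ _ hx hy => exact hmul x y hx hy

theorem AlgHom.commute_of_adjoin_eq_top {s : Set A} (hs : Algebra.adjoin R s = ⊤)
    (φ ψ : A →ₐ[R] A) (hgen : ∀ x ∈ s, φ (ψ x) = ψ (φ x)) :
    Commute φ.toLinearMap ψ.toLinearMap :=
  LinearMap.ext fun x =>
    DFunLike.congr_fun (AlgHom.ext_of_adjoin_eq_top (φ₁ := φ.comp ψ) (φ₂ := ψ.comp φ) hs hgen) x

namespace IsTwistedDerivation

variable {s : Set A} {σ τ D : Module.End R A}

theorem commute_algHom (hs : Algebra.adjoin R s = ⊤) (hD : IsTwistedDerivation σ τ D)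
    (hD1 : D 1 = 0) (φ : A →ₐ[R] A) (hσ : Commute φ.toLinearMap σ)
    (hτ : Commute φ.toLinearMap τ) (hgen : ∀ x ∈ s, φ (D x) = D (φ x)) :
    Commute φ.toLinearMap D := by
  refine Module.End.commute_of_adjoin_eq_top hs (by simp [hD1]) (fun a b ha hb => ?_) hgen
  have hσ' (x : A) : φ (σ x) = σ (φ x) := LinearMap.congr_fun hσ.eq x
  have hτ' (x : A) : φ (τ x) = τ (φ x) := LinearMap.congr_fun hτ.eq x
  simp only [AlgHom.toLinearMap_apply] at ha hb ⊢
  rw [hD, map_add, map_mul, map_mul, map_mul, hD, ha, hb, hσ', hτ']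

theorem commute (hs : Algebra.adjoin R s = ⊤) {σ' τ' d : Module.End R A}
    (hd : IsTwistedDerivation σ' τ' d) (hd1 : d 1 = 0)
    (hD : IsTwistedDerivation σ τ D) (hD1 : D 1 = 0)
    (hσσ' : Commute σ' σ) (hdσ : Commute d σ) (hτ'D : Commute τ' D) (hσ'D : Commute σ' D)
    (hdτ : Commute d τ) (hτ'τ : Commute τ' τ) (hgen : ∀ x ∈ s, d (D x) = D (d x)) :
    Commute d D := by
  refine Module.End.commute_of_adjoin_eq_top hs (by simp [hd1, hD1]) (fun a b ha hb => ?_) hgen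
  have pointwise {f g : Module.End R A} (h : Commute f g) (x : A) : f (g x) = g (f x) :=
    LinearMap.congr_fun h.eq x
  rw [hD, map_add, hd, hd, hd, map_add, hD, hD, ha, hb, pointwise hσσ', pointwise hdσ,
    pointwise hτ'D, pointwise hσ'D, pointwise hdτ, pointwise hτ'τ]
  abel

end IsTwistedDerivation

end TwistedDerivation

theorem commute_algHom_apply_of_adjoin_eq_top {R B C : Type*} [CommSemiring R] [Semiring B]
    [Algebra R B] [Semiring C] [Algebra R C] {s : Set B} (hs : Algebra.adjoin R s = ⊤)
    (ρ : B →ₐ[R] C) {c : C} (hgen : ∀ x ∈ s, Commute c (ρ x)) (b : B) : Commute c (ρ b) := by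
  have hle : Algebra.adjoin R s ≤ (Subalgebra.centralizer R {c}).comap ρ :=
    Algebra.adjoin_le fun x hx => (Subalgebra.mem_centralizer_iff R).2 <| by
      rintro _ rfl
      exact (hgen x hx).eq
  exact (Subalgebra.mem_centralizer_iff R).1 (hle (hs ▸ Algebra.mem_top)) c rfl

theorem RingQuot.adjoin_range_mkAlgHom_ι {R X : Type*} [CommSemiring R]
    (r : FreeAlgebra R X → FreeAlgebra R X → Prop) :
    Algebra.adjoin R (Set.range fun x => mkAlgHom R r (FreeAlgebra.ι R x)) = ⊤ := by
  rw [Set.range_comp' (mkAlgHom R r) (FreeAlgebra.ι R), Algebra.adjoin_image,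
    FreeAlgebra.adjoin_range_ι, Algebra.map_top, AlgHom.range_eq_top]
  exact mkAlgHom_surjective R r

theorem Uq.adjoin_generators_eq_top (p : ℕ) (q : ℂ) :
    Algebra.adjoin ℂ {Eu p q, Fu p q, Ku p q} = ⊤ := by
  have h := RingQuot.adjoin_range_mkAlgHom_ι (uRel p q)
  rw [Fin.range_fin_succ, Fin.range_fin_succ, Set.range_unique] at h
  exact h

namespace OmegaCq

section Relations

variable (p : ℕ) (q : ℂ)

theorem adjoin_generators_eq_top :
    Algebra.adjoin ℂ {Zo p q, Do p q, DZo p q, DDo p q} = ⊤ := by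
  have h := RingQuot.adjoin_range_mkAlgHom_ι (oRel p q)
  rw [Fin.range_fin_succ, Fin.range_fin_succ, Fin.range_fin_succ, Set.range_unique] at h
  exact h

theorem DZo_mul_Zo : DZo p q * Zo p q = (q ^ 2)⁻¹ • (Zo p q * DZo p q) := by
  have h := RingQuot.mkAlgHom_rel ℂ (oRel.dz_z (p := p) (q := q))
  simp only [map_smul, map_mul] at h
  exact h

theorem DDo_mul_Do : DDo p q * Do p q = (q ^ 2) • (Do p q * DDo p q) := by
  have h := RingQuot.mkAlgHom_rel ℂ (oRel.dd_d (p := p) (q := q))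
  simp only [map_smul, map_mul] at h
  exact h

theorem DZo_mul_DZo : DZo p q * DZo p q = 0 := by
  have h := RingQuot.mkAlgHom_rel ℂ (oRel.dzdz (p := p) (q := q))
  rwa [map_pow, map_zero, sq] at h

theorem DDo_mul_DDo : DDo p q * DDo p q = 0 := by
  have h := RingQuot.mkAlgHom_rel ℂ (oRel.dddd (p := p) (q := q))
  rwa [map_pow, map_zero, sq] at h

end Relations

variable {p : ℕ} {q : ℂ} {par : OmegaCq p q →ₐ[ℂ] OmegaCq p q} {d : Module.End ℂ (OmegaCq p q)}

theorem apply_neg_smul_Zo_mul_Zo (hd : IsTwistedDerivation par.toLinearMap 1 d)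
    (hparz : par (Zo p q) = Zo p q) (hdz : d (Zo p q) = DZo p q) :
    d (-q • (Zo p q * Zo p q)) = (-(q + q⁻¹)) • (Zo p q * DZo p q) := by
  rw [map_smul, hd, hdz, AlgHom.toLinearMap_apply, hparz, Module.End.one_apply, DZo_mul_Zo,
    smul_add, smul_smul, ← add_smul]
  congr 1
  rcases eq_or_ne q 0 with rfl | hq
  · simp
  · field_simp
    ring

theorem apply_neg_smul_Do_mul_Do (hd : IsTwistedDerivation par.toLinearMap 1 d)
    (hpard : par (Do p q) = Do p q) (hdd : d (Do p q) = DDo p q) :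
    d (-q • (Do p q * Do p q)) = (-(q ^ 2) * (q + q⁻¹)) • (Do p q * DDo p q) := by
  rw [map_smul, hd, hdd, AlgHom.toLinearMap_apply, hpard, Module.End.one_apply, DDo_mul_Do,
    smul_add, smul_smul, ← add_smul]
  congr 1
  rcases eq_or_ne q 0 with rfl | hq
  · simp
  · field_simp
    ring

theorem apply_Zo_mul_DZo (hd : IsTwistedDerivation par.toLinearMap 1 d)
    (hdz : d (Zo p q) = DZo p q) (hddz : d (DZo p q) = 0) : d (Zo p q * DZo p q) = 0 := by
  rw [hd, hdz, hddz, mul_zero, zero_add, Module.End.one_apply, DZo_mul_DZo]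

theorem apply_Do_mul_DDo (hd : IsTwistedDerivation par.toLinearMap 1 d)
    (hdd : d (Do p q) = DDo p q) (hddd : d (DDo p q) = 0) : d (Do p q * DDo p q) = 0 := by
  rw [hd, hdd, hddd, mul_zero, zero_add, Module.End.one_apply, DDo_mul_DDo]

end OmegaCq

theorem de_rham_differential_commutes_with_uqsl2_general
    (p : ℕ)
    (q : ℂ)
    -- the parity automorphism and the differential
    (par : OmegaCq p q →ₐ[ℂ] OmegaCq p q)
    (hparz : par (Zo p q) = Zo p q) (hpard : par (Do p q) = Do p q)
    (hpardz : par (DZo p q) = -DZo p q) (hpardd : par (DDo p q) = -DDo p q)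
    (d : OmegaCq p q →ₗ[ℂ] OmegaCq p q)
    (hdz : d (Zo p q) = DZo p q) (hdd : d (Do p q) = DDo p q)
    (hddz : d (DZo p q) = 0) (hddd : d (DDo p q) = 0) (hd1 : d (1 : OmegaCq p q) = 0)
    (hLeib : ∀ a b : OmegaCq p q, d (a * b) = d a * b + par a * d b)
    -- the `U_q sl(2)`-module algebra structure
    (ρ : Uq p q →ₐ[ℂ] Module.End ℂ (OmegaCq p q))
    (hEz : ρ (Eu p q) (Zo p q) = -q • (Zo p q * Zo p q))
    (hKz : ρ (Ku p q) (Zo p q) = (q ^ 2) • Zo p q)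
    (hFz : ρ (Fu p q) (Zo p q) = 1)
    (hEd : ρ (Eu p q) (Do p q) = 1)
    (hKd : ρ (Ku p q) (Do p q) = ((q ^ 2)⁻¹) • Do p q)
    (hFd : ρ (Fu p q) (Do p q) = -q • (Do p q * Do p q))
    (hEdz : ρ (Eu p q) (DZo p q) = (-(q + q⁻¹)) • (Zo p q * DZo p q))
    (hKdz : ρ (Ku p q) (DZo p q) = (q ^ 2) • DZo p q)
    (hFdz : ρ (Fu p q) (DZo p q) = 0)
    (hEdd : ρ (Eu p q) (DDo p q) = 0)
    (hKdd : ρ (Ku p q) (DDo p q) = ((q ^ 2)⁻¹) • DDo p q)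
    (hFdd : ρ (Fu p q) (DDo p q) = (-(q ^ 2) * (q + q⁻¹)) • (Do p q * DDo p q))
    -- the module algebra property
    (hLeibE : ∀ a b : OmegaCq p q,
      ρ (Eu p q) (a * b) = a * ρ (Eu p q) b + ρ (Eu p q) a * ρ (Ku p q) b)
    (hLeibF : ∀ a b : OmegaCq p q,
      ρ (Fu p q) (a * b) = ρ (Ku p q ^ (2 * p - 1)) a * ρ (Fu p q) b + ρ (Fu p q) a * b)
    (hLeibK : ∀ a b : OmegaCq p q, ρ (Ku p q) (a * b) = ρ (Ku p q) a * ρ (Ku p q) b)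
    (hE1 : ρ (Eu p q) (1 : OmegaCq p q) = 0)
    (hF1 : ρ (Fu p q) (1 : OmegaCq p q) = 0)
    (hK1 : ρ (Ku p q) (1 : OmegaCq p q) = 1) :
    ∀ (h : Uq p q) (x : OmegaCq p q), ρ h (d x) = d (ρ h x) := by
  have hs := OmegaCq.adjoin_generators_eq_top p q
  let K : OmegaCq p q →ₐ[ℂ] OmegaCq p q := AlgHom.ofLinearMap (ρ (Ku p q)) hK1 hLeibK
  have hd : IsTwistedDerivation par.toLinearMap 1 d := fun a b => (hLeib a b).trans (add_comm _ _)
  have hE : IsTwistedDerivation 1 K.toLinearMap (ρ (Eu p q)) := hLeibE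
  have hF : IsTwistedDerivation (ρ (Ku p q) ^ (2 * p - 1)) 1 (ρ (Fu p q)) := fun a b => by
    simpa only [map_pow, Module.End.one_apply] using hLeibF a b
  have parK : Commute par.toLinearMap K.toLinearMap :=
    AlgHom.commute_of_adjoin_eq_top hs par K <| by
      simp [K, hKz, hKd, hKdz, hKdd, hparz, hpard, hpardz, hpardd]
  have dK : Commute K.toLinearMap d :=
    hd.commute_algHom hs hd1 K parK.symm (Commute.one_right _) <| by
      simp [K, hKz, hKd, hKdz, hKdd, hdz, hdd, hddz, hddd]
  have parE : Commute par.toLinearMap (ρ (Eu p q)) :=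
    hE.commute_algHom hs hE1 par (Commute.one_right _) parK <| by
      simp [hEz, hEd, hEdz, hEdd, hparz, hpard, hpardz, hpardd]
  have parF : Commute par.toLinearMap (ρ (Fu p q)) :=
    hF.commute_algHom hs hF1 par (parK.pow_right _) (Commute.one_right _) <| by
      simp [hFz, hFd, hFdz, hFdd, hparz, hpard, hpardz, hpardd]
  have dE : Commute d (ρ (Eu p q)) :=
    hd.commute hs hd1 hE hE1 (Commute.one_right _) (Commute.one_right _) (Commute.one_left _)
      parE dK.symm (Commute.one_left _) <| by
      simp only [Set.mem_insert_iff, Set.mem_singleton_iff, forall_eq_or_imp, forall_eq]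
      refine ⟨?_, by rw [hEd, hdd, hEdd, hd1], ?_, by rw [hEdd, hddd, map_zero, map_zero]⟩
      · rw [hEz, hdz, hEdz, OmegaCq.apply_neg_smul_Zo_mul_Zo hd hparz hdz]
      · rw [hEdz, hddz, map_zero, map_smul, OmegaCq.apply_Zo_mul_DZo hd hdz hddz, smul_zero]
  have dF : Commute d (ρ (Fu p q)) :=
    hd.commute hs hd1 hF hF1 (parK.pow_right _) (dK.symm.pow_right _) (Commute.one_left _)
      parF (Commute.one_right _) (Commute.one_left _) <| by
      simp only [Set.mem_insert_iff, Set.mem_singleton_iff, forall_eq_or_imp, forall_eq]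
      refine ⟨by rw [hFz, hdz, hFdz, hd1], ?_, by rw [hFdz, hddz, map_zero, map_zero], ?_⟩
      · rw [hFd, hdd, hFdd, OmegaCq.apply_neg_smul_Do_mul_Do hd hpard hdd]
      · rw [hFdd, hddd, map_zero, map_smul, OmegaCq.apply_Do_mul_DDo hd hdd hddd, smul_zero]
  intro h x
  refine (LinearMap.congr_fun (commute_algHom_apply_of_adjoin_eq_top
    (Uq.adjoin_generators_eq_top p q) ρ ?_ h).eq x).symm
  simp only [Set.mem_insert_iff, Set.mem_singleton_iff, forall_eq_or_imp, forall_eq]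
  exact ⟨dE, dF, dK.symm⟩

theorem de_rham_differential_commutes_with_uqsl2
    (p : ℕ) (hp : 2 ≤ p)
    (q : ℂ) (hq : q = Complex.exp (Real.pi * Complex.I / p))
    -- the parity automorphism and the differential
    (par : OmegaCq p q →ₐ[ℂ] OmegaCq p q)
    (hparz : par (Zo p q) = Zo p q) (hpard : par (Do p q) = Do p q)
    (hpardz : par (DZo p q) = -DZo p q) (hpardd : par (DDo p q) = -DDo p q)
    (d : OmegaCq p q →ₗ[ℂ] OmegaCq p q)
    (hdz : d (Zo p q) = DZo p q) (hdd : d (Do p q) = DDo p q)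
    (hddz : d (DZo p q) = 0) (hddd : d (DDo p q) = 0) (hd1 : d (1 : OmegaCq p q) = 0)
    (hLeib : ∀ a b : OmegaCq p q, d (a * b) = d a * b + par a * d b)
    -- the `U_q sl(2)`-module algebra structure
    (ρ : Uq p q →ₐ[ℂ] Module.End ℂ (OmegaCq p q))
    (hEz : ρ (Eu p q) (Zo p q) = -q • (Zo p q * Zo p q))
    (hKz : ρ (Ku p q) (Zo p q) = (q ^ 2) • Zo p q)
    (hFz : ρ (Fu p q) (Zo p q) = 1)
    (hEd : ρ (Eu p q) (Do p q) = 1)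
    (hKd : ρ (Ku p q) (Do p q) = ((q ^ 2)⁻¹) • Do p q)
    (hFd : ρ (Fu p q) (Do p q) = -q • (Do p q * Do p q))
    (hEdz : ρ (Eu p q) (DZo p q) = (-(q + q⁻¹)) • (Zo p q * DZo p q))
    (hKdz : ρ (Ku p q) (DZo p q) = (q ^ 2) • DZo p q)
    (hFdz : ρ (Fu p q) (DZo p q) = 0)
    (hEdd : ρ (Eu p q) (DDo p q) = 0)
    (hKdd : ρ (Ku p q) (DDo p q) = ((q ^ 2)⁻¹) • DDo p q)
    (hFdd : ρ (Fu p q) (DDo p q) = (-(q ^ 2) * (q + q⁻¹)) • (Do p q * DDo p q))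
    -- the module algebra property
    (hLeibE : ∀ a b : OmegaCq p q,
      ρ (Eu p q) (a * b) = a * ρ (Eu p q) b + ρ (Eu p q) a * ρ (Ku p q) b)
    (hLeibF : ∀ a b : OmegaCq p q,
      ρ (Fu p q) (a * b) = ρ (Ku p q ^ (2 * p - 1)) a * ρ (Fu p q) b + ρ (Fu p q) a * b)
    (hLeibK : ∀ a b : OmegaCq p q, ρ (Ku p q) (a * b) = ρ (Ku p q) a * ρ (Ku p q) b)
    (hE1 : ρ (Eu p q) (1 : OmegaCq p q) = 0)
    (hF1 : ρ (Fu p q) (1 : OmegaCq p q) = 0)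
    (hK1 : ρ (Ku p q) (1 : OmegaCq p q) = 1) :
    ∀ (h : Uq p q) (x : OmegaCq p q), ρ h (d x) = d (ρ h x) :=
  de_rham_differential_commutes_with_uqsl2_general p q par hparz hpard hpardz hpardd d hdz hdd hddz
    hddd hd1 hLeib ρ hEz hKz hFz hEd hKd hFd hEdz hKdz hFdz hEdd hKdd hFdd hLeibE hLeibF hLeibK hE1
    hF1 hK1
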